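/- For every real ω and every u > 0, all Jost iterates φ⁽ᵏ⁾_ω(u) are well defined (all integrals converge absolutely) and satisfy |φ⁽ᵏ⁾_ω(u)| ≤ P_ω(u)^k / k!, where P_ω(u) = ∫_u^∞ (4v/(1+|ω|v))·V_0(v) dv < ∞; in particular the series Σ_{k=0}^∞ φ⁽ᵏ⁾_ω(u) converges absolutely. -/

import Mathlib

open Complex MeasureTheory

/-- The entire extension of `z ↦ sin z / z`. -/
noncomputable def sincC (z : ℂ) : ℂ := if z = 0 then 1 else Complex.sin z / z

/-- The Jost iterates for the potential `V`, where the kernel `sin(ω(u−v))/ω` is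
understood as the entire function `ω ↦ (u−v)·S(ω(u−v))`. -/
noncomputable def jostIter (V : ℝ → ℝ) : ℕ → ℝ → ℝ → ℂ
  | 0 => fun ω u => Complex.exp (-Complex.I * (ω : ℂ) * (u : ℂ))
  | k + 1 => fun ω u => -∫ v in Set.Ioi u,
      ((u : ℂ) - (v : ℂ)) * sincC ((ω : ℂ) * ((u : ℂ) - (v : ℂ))) *
        (V v : ℂ) * jostIter V k ω v

open Set Filter Topology

/-!
For `0 ≤ u < v` the kernel is bounded by `min (v, 1/|ω|) ≤ 4v/(1 + |ω|v)`, so with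
`g = jostWeight ω V₀` and `P x = ∫_x^∞ g` an induction on `k` gives
`|φ⁽ᵏ⁺¹⁾(x)| ≤ ∫_x^∞ g · P^k / k! = P(x)^(k+1) / (k+1)!`, because `-P^(k+1)/(k+1)` is a
primitive of `g · P^k` vanishing at infinity. For the Schwarzschild potential, `log y ≤ y - 1`
gives `u < 2 r(u)`, hence `V₀ v ≤ 16M / v³` and `g = O(v⁻²)` is integrable on `(u, ∞)`.
-/

lemma mul_sincC (z : ℂ) : z * sincC z = Complex.sin z := by
  unfold sincC
  split_ifs with h
  · simp [h]
  · exact mul_div_cancel₀ _ h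

lemma norm_sincC_ofReal_le_one (x : ℝ) : ‖sincC x‖ ≤ 1 := by
  unfold sincC
  split_ifs with h
  · simp
  · rw [← Complex.ofReal_sin, ← Complex.ofReal_div, Complex.norm_real, Real.norm_eq_abs, abs_div]
    exact div_le_one_of_le₀ Real.abs_sin_le_abs (abs_nonneg x)

lemma norm_ofReal_mul_sincC_le (ω t : ℝ) : ‖(t : ℂ) * sincC (ω * t)‖ ≤ |t| := by
  rw [norm_mul, Complex.norm_real, Real.norm_eq_abs]
  exact mul_le_of_le_one_right (abs_nonneg t) (by exact_mod_cast norm_sincC_ofReal_le_one (ω * t))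

lemma abs_mul_norm_ofReal_mul_sincC_le_one (ω t : ℝ) : |ω| * ‖(t : ℂ) * sincC (ω * t)‖ ≤ 1 := by
  rw [← Real.norm_eq_abs, ← Complex.norm_real, ← norm_mul, ← mul_assoc, mul_sincC,
    ← Complex.ofReal_mul, ← Complex.ofReal_sin,
    Complex.norm_real, Real.norm_eq_abs]
  exact Real.abs_sin_le_one _

lemma norm_jostKernel_le (ω : ℝ) {x v : ℝ} (hx : 0 ≤ x) (hv : x < v) :
    ‖((x : ℂ) - v) * sincC (ω * ((x : ℂ) - v))‖ ≤ 4 * v / (1 + |ω| * v) := by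
  have hv₀ : 0 < v := hx.trans_lt hv
  have hcast : ((x : ℂ) - v) = ((x - v : ℝ) : ℂ) := by push_cast; ring
  rw [hcast, le_div_iff₀ (by positivity)]
  have h₁ := norm_ofReal_mul_sincC_le ω (x - v)
  have h₂ := abs_mul_norm_ofReal_mul_sincC_le_one ω (x - v)
  rw [abs_of_neg (by linarith)] at h₁
  nlinarith [mul_le_mul_of_nonneg_left h₂ hv₀.le]

section TailIntegral

variable {g : ℝ → ℝ} {a : ℝ}

lemma hasDerivAt_setIntegral_Ioi (hg : IntegrableOn g (Ioi a)) (hgc : ContinuousOn g (Ioi a))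
    {x : ℝ} (hx : a < x) : HasDerivAt (fun y => ∫ v in Ioi y, g v) (-g x) x := by
  have hprim : HasDerivAt (fun y => (∫ v in Ioi a, g v) - ∫ v in a..y, g v) (-g x) x := by
    refine (intervalIntegral.integral_hasDerivAt_right ?_ ?_ ?_).const_sub _
    · exact (intervalIntegrable_iff_integrableOn_Ioc_of_le hx.le).2
        (hg.mono_set Ioc_subset_Ioi_self)
    · exact hgc.stronglyMeasurableAtFilter isOpen_Ioi x hx
    · exact hgc.continuousAt (Ioi_mem_nhds hx)
  refine hprim.congr_of_eventuallyEq ?_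
  filter_upwards [Ioi_mem_nhds hx] with y hy
  rw [← intervalIntegral.integral_Ioi_sub_Ioi hg (le_of_lt hy), sub_sub_cancel]

lemma norm_setIntegral_Ioi_le (hg : IntegrableOn g (Ioi a)) {x : ℝ} (hx : a ≤ x) :
    ‖∫ v in Ioi x, g v‖ ≤ ∫ v in Ioi a, ‖g v‖ :=
  (norm_integral_le_integral_norm _).trans <|
    setIntegral_mono_set hg.norm (ae_of_all _ fun _ => norm_nonneg _)
      (Ioi_subset_Ioi hx).eventuallyLE

lemma integrableOn_mul_pow_setIntegral_Ioi (hg : IntegrableOn g (Ioi a)) (k : ℕ) :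
    IntegrableOn (fun v => g v * (∫ w in Ioi v, g w) ^ k) (Ioi a) := by
  refine hg.mul_bdd (c := (∫ v in Ioi a, ‖g v‖) ^ k) ?_ ?_
  · exact ((hg.continuousOn_Ici_primitive_Ioi.mono Ioi_subset_Ici_self).pow k)
      |>.aestronglyMeasurable measurableSet_Ioi
  · filter_upwards [ae_restrict_mem measurableSet_Ioi] with v hv
    rw [norm_pow]
    exact pow_le_pow_left₀ (norm_nonneg _) (norm_setIntegral_Ioi_le hg (le_of_lt hv)) k

lemma setIntegral_Ioi_mul_pow_setIntegral_Ioi (hg : IntegrableOn g (Ioi a))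
    (hgc : ContinuousOn g (Ioi a)) (k : ℕ) :
    ∫ v in Ioi a, g v * (∫ w in Ioi v, g w) ^ k = (∫ v in Ioi a, g v) ^ (k + 1) / (k + 1) := by
  have hcont : ContinuousWithinAt (fun y => -(∫ v in Ioi y, g v) ^ (k + 1) / (k + 1)) (Ici a) a :=
    ((hg.continuousOn_Ici_primitive_Ioi a self_mem_Ici).pow _).neg.div_const _
  have hderiv : ∀ x ∈ Ioi a, HasDerivAt (fun y => -(∫ v in Ioi y, g v) ^ (k + 1) / (k + 1))
      (g x * (∫ w in Ioi x, g w) ^ k) x := by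
    intro x hx
    refine (((hasDerivAt_setIntegral_Ioi hg hgc hx).pow (k + 1)).neg.div_const
      ((k : ℝ) + 1)).congr_deriv ?_
    push_cast
    field_simp
  have hlim : Tendsto (fun y => -(∫ v in Ioi y, g v) ^ (k + 1) / (k + 1)) atTop (𝓝 0) := by
    simpa using ((tendsto_integral_Ioi_zero tendsto_id).pow (k + 1)).neg.div_const ((k : ℝ) + 1)
  rw [integral_Ioi_of_hasDerivAt_of_tendsto hcont hderiv
    (integrableOn_mul_pow_setIntegral_Ioi hg k) hlim]
  ring

end TailIntegral

noncomputable def jostIntegrand (V : ℝ → ℝ) (k : ℕ) (ω u v : ℝ) : ℂ :=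
  ((u : ℂ) - (v : ℂ)) * sincC ((ω : ℂ) * ((u : ℂ) - (v : ℂ))) * (V v : ℂ) * jostIter V k ω v

noncomputable def jostWeight (ω : ℝ) (V : ℝ → ℝ) (v : ℝ) : ℝ := 4 * v / (1 + |ω| * v) * V v

section JostIterates

variable {V : ℝ → ℝ} {ω : ℝ}

lemma jostIter_succ (k : ℕ) (u : ℝ) :
    jostIter V (k + 1) ω u = -∫ v in Ioi u, jostIntegrand V k ω u v :=
  rfl

lemma measurable_sincC : Measurable sincC :=
  Measurable.ite (measurableSet_singleton 0) measurable_const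
    (Complex.measurable_sin.div measurable_id)

lemma Measurable.jostIntegrand (hV : Measurable V) {k : ℕ} (hφ : Measurable (jostIter V k ω)) :
    Measurable (Function.uncurry (jostIntegrand V k ω)) := by
  have hdiff : Measurable fun p : ℝ × ℝ => (p.1 : ℂ) - (p.2 : ℂ) := by fun_prop
  exact ((hdiff.mul (measurable_sincC.comp (measurable_const.mul hdiff))).mul
    (Complex.measurable_ofReal.comp (hV.comp measurable_snd))).mul (hφ.comp measurable_snd)

lemma measurable_jostIter (hV : Measurable V) (k : ℕ) : Measurable (jostIter V k ω) := by
  induction k with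
  | zero => exact (Complex.continuous_exp.comp (by fun_prop)).measurable
  | succ k ih =>
    have hind : Measurable (({q : ℝ × ℝ | q.1 < q.2}).indicator
        (Function.uncurry (jostIntegrand V k ω))) :=
      (hV.jostIntegrand ih).indicator (measurableSet_lt measurable_fst measurable_snd)
    have heq : jostIter V (k + 1) ω = fun u => -∫ v,
        ({q : ℝ × ℝ | q.1 < q.2}).indicator (Function.uncurry (jostIntegrand V k ω)) (u, v) := by
      funext u
      simp only [jostIter_succ, ← integral_indicator measurableSet_Ioi]
      rfl
    rw [heq]
    exact hind.stronglyMeasurable.integral_prod_right'.measurable.neg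

lemma jostWeight_nonneg {v : ℝ} (hv : 0 ≤ v) (hVv : 0 ≤ V v) : 0 ≤ jostWeight ω V v := by
  unfold jostWeight
  positivity

lemma norm_jostIntegrand_le {k : ℕ} {x v : ℝ} (hx : 0 ≤ x) (hv : x < v) (hVv : 0 ≤ V v) :
    ‖jostIntegrand V k ω x v‖ ≤ jostWeight ω V v * ‖jostIter V k ω v‖ := by
  rw [jostIntegrand, norm_mul, norm_mul, Complex.norm_real, Real.norm_eq_abs, abs_of_nonneg hVv,
    jostWeight]
  gcongr
  exact norm_jostKernel_le ω hx hv

variable {a : ℝ} (hV : Measurable V) (ha : 0 ≤ a) (hVnn : ∀ v ∈ Ioi a, 0 ≤ V v)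
  (hg : IntegrableOn (jostWeight ω V) (Ioi a)) (hgc : ContinuousOn (jostWeight ω V) (Ioi a))
include ha hVnn

lemma norm_jostIntegrand_le_pow_div_factorial {k : ℕ} {x : ℝ} (hx : a ≤ x)
    (hk : ∀ y, a ≤ y → ‖jostIter V k ω y‖ ≤ (∫ w in Ioi y, jostWeight ω V w) ^ k / k.factorial) :
    ∀ᵐ v ∂(volume.restrict (Ioi x)), ‖jostIntegrand V k ω x v‖ ≤
      jostWeight ω V v * (∫ w in Ioi v, jostWeight ω V w) ^ k / k.factorial := by
  filter_upwards [ae_restrict_mem measurableSet_Ioi] with v (hv : x < v)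
  have hav : a < v := hx.trans_lt hv
  rw [mul_div_assoc]
  exact (norm_jostIntegrand_le (ha.trans hx) hv (hVnn v hav)).trans
    (mul_le_mul_of_nonneg_left (hk v hav.le) (jostWeight_nonneg (ha.trans hav.le) (hVnn v hav)))

include hg hgc

lemma norm_jostIter_le (k : ℕ) {x : ℝ} (hx : a ≤ x) :
    ‖jostIter V k ω x‖ ≤ (∫ v in Ioi x, jostWeight ω V v) ^ k / k.factorial := by
  induction k generalizing x with
  | zero => simp [jostIter, Complex.norm_exp]
  | succ k ih =>
    rw [jostIter_succ, norm_neg]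
    calc ‖∫ v in Ioi x, jostIntegrand V k ω x v‖
        ≤ ∫ v in Ioi x, jostWeight ω V v * (∫ w in Ioi v, jostWeight ω V w) ^ k / k.factorial :=
          norm_integral_le_of_norm_le
            ((integrableOn_mul_pow_setIntegral_Ioi (hg.mono_set (Ioi_subset_Ioi hx)) k).div_const _)
            (norm_jostIntegrand_le_pow_div_factorial ha hVnn hx fun y hy => ih hy)
      _ = (∫ v in Ioi x, jostWeight ω V v) ^ (k + 1) / (k + 1).factorial := by
          rw [integral_div, setIntegral_Ioi_mul_pow_setIntegral_Ioi
            (hg.mono_set (Ioi_subset_Ioi hx)) (hgc.mono (Ioi_subset_Ioi hx)),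
            Nat.factorial_succ, Nat.cast_mul, div_div]
          push_cast
          ring

include hV in
lemma integrableOn_jostIntegrand (k : ℕ) {x : ℝ} (hx : a ≤ x) :
    IntegrableOn (jostIntegrand V k ω x) (Ioi x) :=
  ((integrableOn_mul_pow_setIntegral_Ioi (hg.mono_set (Ioi_subset_Ioi hx)) k).div_const _).mono'
    ((hV.jostIntegrand (measurable_jostIter hV k)).comp measurable_prodMk_left).aestronglyMeasurable
    (norm_jostIntegrand_le_pow_div_factorial ha hVnn hx
      fun _ hy => norm_jostIter_le ha hVnn hg hgc k hy)

end JostIterates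

section Weight

variable {V : ℝ → ℝ} {ω : ℝ}

lemma continuousOn_jostWeight (hV : Continuous V) : ContinuousOn (jostWeight ω V) (Ici 0) := by
  refine ((continuousOn_const.mul continuousOn_id).div (by fun_prop) ?_).mul hV.continuousOn
  intro v (hv : 0 ≤ v)
  positivity

lemma integrableOn_jostWeight_of_le_div_pow_three (hV : Continuous V) {a C : ℝ} (ha : 0 < a)
    (hVnn : ∀ v ∈ Ioi a, 0 ≤ V v) (hVle : ∀ v ∈ Ioi a, V v ≤ C / v ^ 3) :
    IntegrableOn (jostWeight ω V) (Ioi a) := by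
  refine Integrable.mono' ((integrableOn_Ioi_rpow_of_lt (by norm_num : (-2 : ℝ) < -1) ha).const_mul
    (4 * C)) (((continuousOn_jostWeight hV).mono (Ioi_subset_Ici ha.le)).aestronglyMeasurable
      measurableSet_Ioi) ?_
  filter_upwards [ae_restrict_mem measurableSet_Ioi] with v (hv : a < v)
  have hv₀ : 0 < v := ha.trans hv
  rw [Real.norm_of_nonneg (jostWeight_nonneg hv₀.le (hVnn v hv)), jostWeight,
    Real.rpow_neg hv₀.le, Real.rpow_two]
  calc 4 * v / (1 + |ω| * v) * V v
      ≤ 4 * v * (C / v ^ 3) := by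
        gcongr
        · exact hVnn v hv
        · exact div_le_self (by positivity) (by simp; positivity)
        · exact hVle v hv
    _ = 4 * C * (v ^ 2)⁻¹ := by field_simp

end Weight

noncomputable def reggeWheelerCoord (M s : ℝ) : ℝ := s + 2 * M * Real.log (s / (2 * M) - 1)

section ReggeWheelerCoord

variable {M : ℝ} (hM : 0 < M)
include hM

lemma strictMonoOn_reggeWheelerCoord : StrictMonoOn (reggeWheelerCoord M) (Ioi (2 * M)) := by
  intro s (hs : 2 * M < s) t _ hst
  have hlog : Real.log (s / (2 * M) - 1) ≤ Real.log (t / (2 * M) - 1) := by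
    apply Real.log_le_log
    · rw [sub_pos, one_lt_div (by positivity)]
      exact hs
    · gcongr
  unfold reggeWheelerCoord
  nlinarith

lemma reggeWheelerCoord_le {s : ℝ} (hs : 2 * M < s) : reggeWheelerCoord M s ≤ 2 * s - 4 * M := by
  have hlog := Real.log_le_sub_one_of_pos (x := s / (2 * M) - 1)
    (by rw [sub_pos, one_lt_div (by positivity)]; exact hs)
  have : 2 * M * (s / (2 * M) - 1 - 1) = s - 4 * M := by field_simp; ring
  unfold reggeWheelerCoord
  nlinarith

variable {r : ℝ → ℝ} (hr : ∀ u, 2 * M < r u ∧ reggeWheelerCoord M (r u) = u)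
include hr

lemma lt_two_mul_of_reggeWheelerCoord_eq (u : ℝ) : u < 2 * r u := by
  have := reggeWheelerCoord_le hM (hr u).1
  rw [(hr u).2] at this
  linarith

/-- `u ↦ log (r u - 2M)` is a monotone surjection onto `ℝ`, hence continuous. -/
lemma continuous_of_reggeWheelerCoord_eq : Continuous r := by
  have hmono : Monotone r := fun u v huv => by
    rwa [← (strictMonoOn_reggeWheelerCoord hM).le_iff_le (hr u).1 (hr v).1, (hr u).2, (hr v).2]
  have hsurj : Function.Surjective fun u => Real.log (r u - 2 * M) := by
    intro t
    have hs : 2 * M < 2 * M + Real.exp t := by linarith [Real.exp_pos t]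
    refine ⟨reggeWheelerCoord M (2 * M + Real.exp t), ?_⟩
    have := (strictMonoOn_reggeWheelerCoord hM).injOn (hr _).1 hs (hr _).2
    simp [this]
  have hlog : Continuous fun u => Real.log (r u - 2 * M) :=
    Monotone.continuous_of_surjective
      (fun u v huv => Real.log_le_log (by linarith [(hr u).1]) (by linarith [hmono huv])) hsurj
  have hr_eq : r = fun u => 2 * M + Real.exp (Real.log (r u - 2 * M)) := by
    funext u
    rw [Real.exp_log (by linarith [(hr u).1])]
    ring
  rw [hr_eq]
  fun_prop

end ReggeWheelerCoord

section Potential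

variable {M : ℝ} (hM : 0 < M) {r : ℝ → ℝ} (hr : ∀ u, 2 * M < r u ∧ reggeWheelerCoord M (r u) = u)
  {V₀ : ℝ → ℝ} (hV : ∀ u, V₀ u = (1 - 2 * M / r u) * (2 * M / (r u) ^ 3))
include hM hr hV

lemma continuous_reggeWheelerPotential : Continuous V₀ := by
  have hr₀ : ∀ u, r u ≠ 0 := fun u => by linarith [(hr u).1]
  have := continuous_of_reggeWheelerCoord_eq hM hr
  rw [funext hV]
  fun_prop (disch := simp [hr₀])

lemma reggeWheelerPotential_nonneg (u : ℝ) : 0 ≤ V₀ u := by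
  have h₀ : 0 < r u := by linarith [(hr u).1]
  have h₁ : 2 * M / r u < 1 := (div_lt_one h₀).2 (hr u).1
  rw [hV]
  exact mul_nonneg (by linarith) (by positivity)

lemma reggeWheelerPotential_le {u : ℝ} (hu : 0 < u) : V₀ u ≤ 16 * M / u ^ 3 := by
  have h₀ : 0 < r u := by linarith [(hr u).1]
  have h₂ := lt_two_mul_of_reggeWheelerCoord_eq hM hr u
  calc V₀ u ≤ 2 * M / r u ^ 3 := by
        rw [hV]
        exact mul_le_of_le_one_left (by positivity) (by simp; positivity)
    _ ≤ 2 * M / (u / 2) ^ 3 := by gcongr; linarith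
    _ = 16 * M / u ^ 3 := by field_simp; ring

end Potential

theorem stmt9 (M : ℝ) (hM : 0 < M) (r : ℝ → ℝ)
    (hr : ∀ u : ℝ, 2 * M < r u ∧ r u + 2 * M * Real.log (r u / (2 * M) - 1) = u)
    (V₀ : ℝ → ℝ) (hV : ∀ u : ℝ, V₀ u = (1 - 2 * M / r u) * (2 * M / (r u) ^ 3))
    (ω : ℝ) (u : ℝ) (hu : 0 < u) :
    IntegrableOn (fun v : ℝ => 4 * v / (1 + |ω| * v) * V₀ v) (Set.Ioi u) ∧
    (∀ k : ℕ, IntegrableOn (fun v : ℝ =>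
        ((u : ℂ) - (v : ℂ)) * sincC ((ω : ℂ) * ((u : ℂ) - (v : ℂ))) *
          (V₀ v : ℂ) * jostIter V₀ k ω v) (Set.Ioi u)) ∧
    (∀ k : ℕ, ‖jostIter V₀ k ω u‖ ≤
        (∫ v in Set.Ioi u, 4 * v / (1 + |ω| * v) * V₀ v) ^ k / (k.factorial : ℝ)) ∧
    Summable (fun k : ℕ => ‖jostIter V₀ k ω u‖) := by
  have hV_cont : Continuous V₀ := continuous_reggeWheelerPotential hM hr hV
  have hV_nn : ∀ v ∈ Ioi u, 0 ≤ V₀ v := fun v _ => reggeWheelerPotential_nonneg hM hr hV v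
  have hg : IntegrableOn (jostWeight ω V₀) (Ioi u) :=
    integrableOn_jostWeight_of_le_div_pow_three hV_cont hu hV_nn
      fun v hv => reggeWheelerPotential_le hM hr hV (hu.trans hv)
  have hgc : ContinuousOn (jostWeight ω V₀) (Ioi u) :=
    (continuousOn_jostWeight hV_cont).mono (Ioi_subset_Ici hu.le)
  have hbound (k : ℕ) := norm_jostIter_le hu.le hV_nn hg hgc k le_rfl
  refine ⟨hg, fun k => integrableOn_jostIntegrand hV_cont.measurable hu.le hV_nn hg hgc k le_rfl,
    hbound, ?_⟩
  exact Summable.of_nonneg_of_le (fun _ => norm_nonneg _) hbound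
    (Real.summable_pow_div_factorial _)
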